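/- Let ℋ = (H; ·, ⊥) be a Hopf q-brace with bijective antipode S. Then S(h·k) = S(h_(1))·(k ⊥ h_(2)) for all h,k ∈ H; consequently S(h)·k = S(h_(1) · k_{h_(2)}), where k_h := k ⊥ S(h) denotes the right regular structure map. -/
import Mathlib


open TensorProduct

noncomputable section

variable (k : Type) [Field k] (X : Type) [AddCommGroup X] [Module k X] [Coalgebra k X]

/-- x ⊗ y ↦ ε(y) x -/
def cE : X ⊗[k] X →ₗ[k] X :=
  (TensorProduct.rid k X).toLinearMap ∘ₗ LinearMap.lTensor X (Coalgebra.counit (R := k))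

/-- x ⊗ y ↦ ε(x) y -/
def cE' : X ⊗[k] X →ₗ[k] X :=
  (TensorProduct.lid k X).toLinearMap ∘ₗ LinearMap.rTensor X (Coalgebra.counit (R := k))

/-- first Sweedler component of a morphism `X⊗X → X⊗X` -/
def comp1 (s : X ⊗[k] X →ₗ[k] X ⊗[k] X) : X ⊗[k] X →ₗ[k] X := cE k X ∘ₗ s

/-- second Sweedler component of a morphism `X⊗X → X⊗X` -/
def comp2 (s : X ⊗[k] X →ₗ[k] X ⊗[k] X) : X ⊗[k] X →ₗ[k] X := cE' k X ∘ₗ s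

/-- `Gmap f (x ⊗ y) = f (x ⊗ y₍₁₎) ⊗ y₍₂₎` -/
def Gmap (f : X ⊗[k] X →ₗ[k] X) : X ⊗[k] X →ₗ[k] X ⊗[k] X :=
  TensorProduct.map f LinearMap.id ∘ₗ (TensorProduct.assoc k X X X).symm.toLinearMap ∘ₗ
    LinearMap.lTensor X (Coalgebra.comul (R := k))

/-- comultiplication of `X^cop` -/
def comulCop : X →ₗ[k] X ⊗[k] X :=
  (TensorProduct.comm k X X).toLinearMap ∘ₗ Coalgebra.comul (R := k)

/-- `GmapCop f (x ⊗ y) = f (x ⊗ y₍₂₎) ⊗ y₍₁₎` -/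
def GmapCop (f : X ⊗[k] X →ₗ[k] X) : X ⊗[k] X →ₗ[k] X ⊗[k] X :=
  TensorProduct.map f LinearMap.id ∘ₗ (TensorProduct.assoc k X X X).symm.toLinearMap ∘ₗ
    LinearMap.lTensor X (comulCop k X)

/-- comultiplication of `X ⊗ X` -/
def comulT : X ⊗[k] X →ₗ[k] (X ⊗[k] X) ⊗[k] (X ⊗[k] X) :=
  (TensorProduct.tensorTensorTensorComm k X X X X).toLinearMap ∘ₗ
    TensorProduct.map (Coalgebra.comul (R := k)) (Coalgebra.comul (R := k))

/-- comultiplication of `X ⊗ X^cop` -/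
def comulTCop : X ⊗[k] X →ₗ[k] (X ⊗[k] X) ⊗[k] (X ⊗[k] X) :=
  (TensorProduct.tensorTensorTensorComm k X X X X).toLinearMap ∘ₗ
    TensorProduct.map (Coalgebra.comul (R := k)) (comulCop k X)

/-- comultiplication of `X^cop ⊗ X^cop` -/
def comulTcc : X ⊗[k] X →ₗ[k] (X ⊗[k] X) ⊗[k] (X ⊗[k] X) :=
  (TensorProduct.tensorTensorTensorComm k X X X X).toLinearMap ∘ₗ
    TensorProduct.map (comulCop k X) (comulCop k X)

/-- counit of `X ⊗ X` -/
def counitT : X ⊗[k] X →ₗ[k] k :=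
  (TensorProduct.lid k k).toLinearMap ∘ₗ
    TensorProduct.map (Coalgebra.counit (R := k)) (Coalgebra.counit (R := k))

/-- `s : X⊗X → X⊗X` is a coalgebra morphism -/
def IsCoalgEndo (s : X ⊗[k] X →ₗ[k] X ⊗[k] X) : Prop :=
  comulT k X ∘ₗ s = TensorProduct.map s s ∘ₗ comulT k X ∧ counitT k X ∘ₗ s = counitT k X

/-- `f : X⊗X → X` is a coalgebra morphism -/
def IsCoalgMor (f : X ⊗[k] X →ₗ[k] X) : Prop :=
  Coalgebra.comul (R := k) ∘ₗ f = TensorProduct.map f f ∘ₗ comulT k X ∧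
  Coalgebra.counit (R := k) ∘ₗ f = counitT k X

/-- `f : X ⊗ X^cop → X` is a coalgebra morphism -/
def IsCoalgMorCop (f : X ⊗[k] X →ₗ[k] X) : Prop :=
  Coalgebra.comul (R := k) ∘ₗ f = TensorProduct.map f f ∘ₗ comulTCop k X ∧
  Coalgebra.counit (R := k) ∘ₗ f = counitT k X

/-- the operation `x ⊥ y := s₁ ((y·x₍₁₎) ⊗ x₍₂₎)` -/
def dOf (s : X ⊗[k] X →ₗ[k] X ⊗[k] X) (p : X ⊗[k] X →ₗ[k] X) : X ⊗[k] X →ₗ[k] X :=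
  comp1 k X s ∘ₗ Gmap k X p ∘ₗ (TensorProduct.comm k X X).toLinearMap

/-- the operation `⊥` of the endomorphism `s` viewed on `X^cop ⊗ X^cop` -/
def dOfCop (s : X ⊗[k] X →ₗ[k] X ⊗[k] X) (p : X ⊗[k] X →ₗ[k] X) : X ⊗[k] X →ₗ[k] X :=
  comp1 k X s ∘ₗ GmapCop k X p ∘ₗ (TensorProduct.comm k X X).toLinearMap

/-- left non-degeneracy of `s` : `G_s` is invertible -/
def LeftNonDeg (s : X ⊗[k] X →ₗ[k] X ⊗[k] X) : Prop :=
  Function.Bijective (Gmap k X (comp2 k X s))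

/-- `p` is the operation `·` associated with a left non-degenerate `s`, i.e.
`(x·y₍₁₎)^(y₍₂₎) = x^(y₍₁₎)·y₍₂₎ = ε(y)x`. -/
def IsDotOf (s : X ⊗[k] X →ₗ[k] X ⊗[k] X) (p : X ⊗[k] X →ₗ[k] X) : Prop :=
  comp2 k X s ∘ₗ Gmap k X p = cE k X ∧ p ∘ₗ Gmap k X (comp2 k X s) = cE k X

def s12m (s : X ⊗[k] X →ₗ[k] X ⊗[k] X) : (X ⊗[k] X) ⊗[k] X →ₗ[k] (X ⊗[k] X) ⊗[k] X :=
  LinearMap.rTensor X s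

def s23m (s : X ⊗[k] X →ₗ[k] X ⊗[k] X) : (X ⊗[k] X) ⊗[k] X →ₗ[k] (X ⊗[k] X) ⊗[k] X :=
  (TensorProduct.assoc k X X X).symm.toLinearMap ∘ₗ LinearMap.lTensor X s ∘ₗ
    (TensorProduct.assoc k X X X).toLinearMap

/-- the braid equation -/
def IsBraidSol (s : X ⊗[k] X →ₗ[k] X ⊗[k] X) : Prop :=
  s12m k X s ∘ₗ s23m k X s ∘ₗ s12m k X s = s23m k X s ∘ₗ s12m k X s ∘ₗ s23m k X s

/-- the exchange identity `y₍₁₎⊥x₍₂₎ ⊗ x₍₁₎·y₍₂₎ = y₍₂₎⊥x₍₁₎ ⊗ x₍₂₎·y₍₁₎` -/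
def ExchangeId (p d : X ⊗[k] X →ₗ[k] X) : Prop :=
  ∀ (x y : X) (n m : ℕ) (x1 x2 : Fin n → X) (y1 y2 : Fin m → X),
    (∑ i, x1 i ⊗ₜ[k] x2 i) = Coalgebra.comul (R := k) x →
    (∑ j, y1 j ⊗ₜ[k] y2 j) = Coalgebra.comul (R := k) y →
    (∑ i, ∑ j, d (y1 j ⊗ₜ[k] x2 i) ⊗ₜ[k] p (x1 i ⊗ₜ[k] y2 j)) =
      ∑ i, ∑ j, d (y2 j ⊗ₜ[k] x1 i) ⊗ₜ[k] p (x2 i ⊗ₜ[k] y1 j)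

/-- the three q-cycle coalgebra conditions -/
def QCycleConds (p d : X ⊗[k] X →ₗ[k] X) : Prop :=
  ∀ (x y z : X) (n m : ℕ) (y1 y2 : Fin n → X) (z1 z2 : Fin m → X),
    (∑ i, y1 i ⊗ₜ[k] y2 i) = Coalgebra.comul (R := k) y →
    (∑ j, z1 j ⊗ₜ[k] z2 j) = Coalgebra.comul (R := k) z →
    ((∑ i, p (p (x ⊗ₜ[k] y1 i) ⊗ₜ[k] d (z ⊗ₜ[k] y2 i))) =
        ∑ j, p (p (x ⊗ₜ[k] z2 j) ⊗ₜ[k] p (y ⊗ₜ[k] z1 j)) ∧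
     (∑ i, d (p (x ⊗ₜ[k] y1 i) ⊗ₜ[k] p (z ⊗ₜ[k] y2 i))) =
        ∑ j, p (d (x ⊗ₜ[k] z2 j) ⊗ₜ[k] d (y ⊗ₜ[k] z1 j)) ∧
     (∑ i, d (d (x ⊗ₜ[k] y1 i) ⊗ₜ[k] d (z ⊗ₜ[k] y2 i))) =
        ∑ j, d (d (x ⊗ₜ[k] z2 j) ⊗ₜ[k] p (y ⊗ₜ[k] z1 j)))


/-- the left action `ˣy := y₍₂₎ ⊥ x^(y₍₁₎)`, where `g` is the operation `x^y` -/
def bOf (g d : X ⊗[k] X →ₗ[k] X) : X ⊗[k] X →ₗ[k] X :=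
  d ∘ₗ (TensorProduct.comm k X X).toLinearMap ∘ₗ Gmap k X g

/-- the left action `_xy := y₍₁₎ · x_(y₍₂₎)`, where `g'` is the operation `x_y` -/
def uOfCop (g' p : X ⊗[k] X →ₗ[k] X) : X ⊗[k] X →ₗ[k] X :=
  p ∘ₗ (TensorProduct.comm k X X).toLinearMap ∘ₗ GmapCop k X g'

/-- `Hmap f (x ⊗ y) = f (y₍₂₎ ⊗ x) ⊗ y₍₁₎` -/
def Hmap (f : X ⊗[k] X →ₗ[k] X) : X ⊗[k] X →ₗ[k] X ⊗[k] X :=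
  TensorProduct.map f LinearMap.id ∘ₗ (TensorProduct.assoc k X X X).symm.toLinearMap ∘ₗ
    LinearMap.lTensor X (TensorProduct.comm k X X).toLinearMap ∘ₗ
    (TensorProduct.assoc k X X X).toLinearMap ∘ₗ
    LinearMap.rTensor X (comulCop k X) ∘ₗ (TensorProduct.comm k X X).toLinearMap

/-- `HmapCop f (x ⊗ y) = f (y₍₁₎ ⊗ x) ⊗ y₍₂₎` -/
def HmapCop (f : X ⊗[k] X →ₗ[k] X) : X ⊗[k] X →ₗ[k] X ⊗[k] X :=
  TensorProduct.map f LinearMap.id ∘ₗ (TensorProduct.assoc k X X X).symm.toLinearMap ∘ₗ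
    LinearMap.lTensor X (TensorProduct.comm k X X).toLinearMap ∘ₗ
    (TensorProduct.assoc k X X X).toLinearMap ∘ₗ
    LinearMap.rTensor X (Coalgebra.comul (R := k)) ∘ₗ (TensorProduct.comm k X X).toLinearMap

variable (H : Type) [Ring H] [HopfAlgebra k H]

/-- `(H, ·)` is a right module over `H^op`: `h·1 = h` and `h·(ab) = (h·b)·a` -/
def RightOpModule (p : H ⊗[k] H →ₗ[k] H) : Prop :=
  (∀ h : H, p (h ⊗ₜ[k] (1 : H)) = h) ∧
  ∀ h a b : H, p (h ⊗ₜ[k] (a * b)) = p (p (h ⊗ₜ[k] b) ⊗ₜ[k] a)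

/-- the Hopf q-brace distributivity laws -/
def QBraceDistrib (p d : H ⊗[k] H →ₗ[k] H) : Prop :=
  ∀ (h kk l : H) (n m : ℕ) (l1 l2 : Fin n → H) (k1 k2 : Fin m → H),
    (∑ i, l1 i ⊗ₜ[k] l2 i) = Coalgebra.comul (R := k) l →
    (∑ j, k1 j ⊗ₜ[k] k2 j) = Coalgebra.comul (R := k) kk →
    (p ((h * kk) ⊗ₜ[k] l) =
        ∑ i, ∑ j, p (h ⊗ₜ[k] d (l1 i ⊗ₜ[k] k2 j)) * p (k1 j ⊗ₜ[k] l2 i)) ∧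
    (d ((h * kk) ⊗ₜ[k] l) =
        ∑ i, ∑ j, d (h ⊗ₜ[k] p (l1 i ⊗ₜ[k] k2 j)) * d (k1 j ⊗ₜ[k] l2 i))

/-- A Hopf q-brace: a regular q-cycle coalgebra on a Hopf algebra with
right `H^op`-module structures and the distributivity laws -/
def IsHopfQBrace (p d : H ⊗[k] H →ₗ[k] H) : Prop :=
  IsCoalgMorCop k H p ∧ IsCoalgMorCop k H d ∧ ExchangeId k H p d ∧
  Function.Bijective (Gmap k H p) ∧ Function.Bijective (GmapCop k H d) ∧
  QCycleConds k H p d ∧ RightOpModule k H p ∧ RightOpModule k H d ∧ QBraceDistrib k H p d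

/-- the Hopf skew-brace condition `(k⊥h₍₂₎)h₍₁₎ = (h·k₍₁₎)k₍₂₎` -/
def SkewCond (p d : H ⊗[k] H →ₗ[k] H) : Prop :=
  ∀ (h kk : H) (n m : ℕ) (h1 h2 : Fin n → H) (k1 k2 : Fin m → H),
    (∑ i, h1 i ⊗ₜ[k] h2 i) = Coalgebra.comul (R := k) h →
    (∑ j, k1 j ⊗ₜ[k] k2 j) = Coalgebra.comul (R := k) kk →
    (∑ i, d (kk ⊗ₜ[k] h2 i) * h1 i) = ∑ j, p (h ⊗ₜ[k] k1 j) * k2 j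

def IsHopfSkewBrace (p d : H ⊗[k] H →ₗ[k] H) : Prop :=
  IsHopfQBrace k H p d ∧ SkewCond k H p d

/-- weak braiding operator conditions -/
def IsWeakBraidingOp (s : H ⊗[k] H →ₗ[k] H ⊗[k] H) : Prop :=
  (s ∘ₗ LinearMap.rTensor H (LinearMap.mul' k H) =
    LinearMap.lTensor H (LinearMap.mul' k H) ∘ₗ (TensorProduct.assoc k H H H).toLinearMap ∘ₗ
      LinearMap.rTensor H s ∘ₗ (TensorProduct.assoc k H H H).symm.toLinearMap ∘ₗ
      LinearMap.lTensor H s ∘ₗ (TensorProduct.assoc k H H H).toLinearMap) ∧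
  (s ∘ₗ LinearMap.lTensor H (LinearMap.mul' k H) =
    LinearMap.rTensor H (LinearMap.mul' k H) ∘ₗ (TensorProduct.assoc k H H H).symm.toLinearMap ∘ₗ
      LinearMap.lTensor H s ∘ₗ (TensorProduct.assoc k H H H).toLinearMap ∘ₗ
      LinearMap.rTensor H s ∘ₗ (TensorProduct.assoc k H H H).symm.toLinearMap) ∧
  (∀ h : H, s ((1 : H) ⊗ₜ[k] h) = h ⊗ₜ[k] (1 : H)) ∧
  (∀ h : H, s (h ⊗ₜ[k] (1 : H)) = (1 : H) ⊗ₜ[k] h)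

/-- `(H, H, α, β)` is a matched pair of bialgebras -/
def IsMatchedPairSelf (α β : H ⊗[k] H →ₗ[k] H) : Prop :=
  ((∀ l : H, α (l ⊗ₜ[k] (1 : H)) = l) ∧
   (∀ l a b : H, α (l ⊗ₜ[k] (a * b)) = α (α (l ⊗ₜ[k] a) ⊗ₜ[k] b))) ∧
  IsCoalgMor k H α ∧
  ((∀ h : H, β ((1 : H) ⊗ₜ[k] h) = h) ∧
   (∀ a b h : H, β ((a * b) ⊗ₜ[k] h) = β (a ⊗ₜ[k] β (b ⊗ₜ[k] h)))) ∧
  IsCoalgMor k H β ∧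
  (∀ (l h h' : H) (n m : ℕ) (l1 l2 : Fin n → H) (h1 h2 : Fin m → H),
     (∑ i, l1 i ⊗ₜ[k] l2 i) = Coalgebra.comul (R := k) l →
     (∑ j, h1 j ⊗ₜ[k] h2 j) = Coalgebra.comul (R := k) h →
     β (l ⊗ₜ[k] (h * h')) =
       ∑ i, ∑ j, β (l1 i ⊗ₜ[k] h1 j) * β (α (l2 i ⊗ₜ[k] h2 j) ⊗ₜ[k] h')) ∧
  (∀ (l' l h : H) (n m : ℕ) (l1 l2 : Fin n → H) (h1 h2 : Fin m → H),
     (∑ i, l1 i ⊗ₜ[k] l2 i) = Coalgebra.comul (R := k) l →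
     (∑ j, h1 j ⊗ₜ[k] h2 j) = Coalgebra.comul (R := k) h →
     α ((l' * l) ⊗ₜ[k] h) =
       ∑ i, ∑ j, α (l' ⊗ₜ[k] β (l1 i ⊗ₜ[k] h1 j)) * α (l2 i ⊗ₜ[k] h2 j)) ∧
  (∀ h : H, α ((1 : H) ⊗ₜ[k] h) = Coalgebra.counit (R := k) h • (1 : H)) ∧
  (∀ l : H, β (l ⊗ₜ[k] (1 : H)) = Coalgebra.counit (R := k) l • (1 : H)) ∧
  (∀ (l h : H) (n m : ℕ) (l1 l2 : Fin n → H) (h1 h2 : Fin m → H),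
     (∑ i, l1 i ⊗ₜ[k] l2 i) = Coalgebra.comul (R := k) l →
     (∑ j, h1 j ⊗ₜ[k] h2 j) = Coalgebra.comul (R := k) h →
     (∑ i, ∑ j, β (l1 i ⊗ₜ[k] h1 j) ⊗ₜ[k] α (l2 i ⊗ₜ[k] h2 j)) =
       ∑ i, ∑ j, β (l2 i ⊗ₜ[k] h2 j) ⊗ₜ[k] α (l1 i ⊗ₜ[k] h1 j))

section AuxLemmas

open Coalgebra HopfAlgebra LinearMap

variable {k H}

/-- every element's comultiplication has a Fin-indexed representation -/
lemma exists_rep (x : H) : ∃ (n : ℕ) (x1 x2 : Fin n → H),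
    (∑ i, x1 i ⊗ₜ[k] x2 i) = Coalgebra.comul (R := k) x := by
  obtain ⟨S, hS⟩ := TensorProduct.exists_finset (Coalgebra.comul (R := k) x)
  refine ⟨S.card, (fun i => (S.equivFin.symm i).1.1), (fun i => (S.equivFin.symm i).1.2), ?_⟩
  rw [hS, ← Finset.sum_attach S (fun i => i.1 ⊗ₜ[k] i.2)]
  exact Equiv.sum_comp S.equivFin.symm (fun i => ((i : H × H)).1 ⊗ₜ[k] ((i : H × H)).2)

lemma sum_counit_smul {x : H} {n : ℕ} {x1 x2 : Fin n → H}
    (hx : (∑ i, x1 i ⊗ₜ[k] x2 i) = Coalgebra.comul (R := k) x) :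
    ∑ i, Coalgebra.counit (R := k) (x1 i) • x2 i = x := by
  have := congrArg (fun z => (TensorProduct.lid k H)
    ((LinearMap.rTensor H (Coalgebra.counit (R := k))) z)) hx
  simpa [map_sum] using this

lemma sum_smul_counit {x : H} {n : ℕ} {x1 x2 : Fin n → H}
    (hx : (∑ i, x1 i ⊗ₜ[k] x2 i) = Coalgebra.comul (R := k) x) :
    ∑ i, Coalgebra.counit (R := k) (x2 i) • x1 i = x := by
  have := congrArg (fun z => (TensorProduct.rid k H)
    ((LinearMap.lTensor H (Coalgebra.counit (R := k))) z)) hx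
  simpa [map_sum] using this

lemma sum_antipode_mul {x : H} {n : ℕ} {x1 x2 : Fin n → H}
    (hx : (∑ i, x1 i ⊗ₜ[k] x2 i) = Coalgebra.comul (R := k) x) :
    ∑ i, HopfAlgebra.antipode (R := k) (x1 i) * x2 i
      = Coalgebra.counit (R := k) x • (1 : H) := by
  have := congrArg (fun z => (LinearMap.mul' k H)
    ((LinearMap.rTensor H (HopfAlgebra.antipode (R := k))) z)) hx
  simp only [map_sum, LinearMap.rTensor_tmul, LinearMap.mul'_apply] at this
  rw [this, HopfAlgebra.mul_antipode_rTensor_comul_apply]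
  exact Algebra.algebraMap_eq_smul_one _

lemma sum_mul_antipode {x : H} {n : ℕ} {x1 x2 : Fin n → H}
    (hx : (∑ i, x1 i ⊗ₜ[k] x2 i) = Coalgebra.comul (R := k) x) :
    ∑ i, x1 i * HopfAlgebra.antipode (R := k) (x2 i)
      = Coalgebra.counit (R := k) x • (1 : H) := by
  have := congrArg (fun z => (LinearMap.mul' k H)
    ((LinearMap.lTensor H (HopfAlgebra.antipode (R := k))) z)) hx
  simp only [map_sum, LinearMap.lTensor_tmul, LinearMap.mul'_apply] at this
  rw [this, HopfAlgebra.mul_antipode_lTensor_comul_apply]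
  exact Algebra.algebraMap_eq_smul_one _

lemma sum2_mul_antipode {x : H} {n m : ℕ} {u v : Fin n → Fin m → H}
    (hx : (∑ i, ∑ j, u i j ⊗ₜ[k] v i j) = Coalgebra.comul (R := k) x) :
    ∑ i, ∑ j, u i j * HopfAlgebra.antipode (R := k) (v i j)
      = Coalgebra.counit (R := k) x • (1 : H) := by
  have := congrArg (fun z => (LinearMap.mul' k H)
    ((LinearMap.lTensor H (HopfAlgebra.antipode (R := k))) z)) hx
  simp only [map_sum, LinearMap.lTensor_tmul, LinearMap.mul'_apply] at this
  rw [this, HopfAlgebra.mul_antipode_lTensor_comul_apply]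
  exact Algebra.algebraMap_eq_smul_one _

/-- `comulTCop` on a pure tensor, in terms of representations. -/
lemma comulTCop_tmul {h K : H} {n m : ℕ} {h1 h2 : Fin n → H} {K1 K2 : Fin m → H}
    (hh : (∑ i, h1 i ⊗ₜ[k] h2 i) = Coalgebra.comul (R := k) h)
    (hK : (∑ j, K1 j ⊗ₜ[k] K2 j) = Coalgebra.comul (R := k) K) :
    comulTCop k H (h ⊗ₜ[k] K)
      = ∑ i, ∑ j, (h1 i ⊗ₜ[k] K2 j) ⊗ₜ[k] (h2 i ⊗ₜ[k] K1 j) := by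
  simp only [comulTCop, comulCop, LinearMap.comp_apply, LinearEquiv.coe_coe,
    TensorProduct.map_tmul, LinearMap.coe_comp, Function.comp_apply]
  rw [← hh, ← hK]
  simp only [TensorProduct.sum_tmul, TensorProduct.tmul_sum, map_sum,
    TensorProduct.comm_tmul, TensorProduct.tensorTensorTensorComm_tmul]
  exact Finset.sum_comm

end AuxLemmas
section AuxLemmas2

open Coalgebra HopfAlgebra LinearMap

variable {k H}

/-- `comul` of `p (h ⊗ K)` for a coalgebra morphism `H ⊗ H^cop → H`. -/
lemma comul_p {p : H ⊗[k] H →ₗ[k] H} (hp : IsCoalgMorCop k H p)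
    {h K : H} {n m : ℕ} {h1 h2 : Fin n → H} {K1 K2 : Fin m → H}
    (hh : (∑ i, h1 i ⊗ₜ[k] h2 i) = Coalgebra.comul (R := k) h)
    (hK : (∑ j, K1 j ⊗ₜ[k] K2 j) = Coalgebra.comul (R := k) K) :
    Coalgebra.comul (R := k) (p (h ⊗ₜ[k] K))
      = ∑ i, ∑ j, p (h1 i ⊗ₜ[k] K2 j) ⊗ₜ[k] p (h2 i ⊗ₜ[k] K1 j) := by
  have := LinearMap.congr_fun hp.1 (h ⊗ₜ[k] K)
  simp only [LinearMap.comp_apply] at this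
  rw [this, comulTCop_tmul hh hK]
  simp [map_sum]

lemma counit_p {p : H ⊗[k] H →ₗ[k] H} (hp : IsCoalgMorCop k H p) (h K : H) :
    Coalgebra.counit (R := k) (p (h ⊗ₜ[k] K))
      = Coalgebra.counit (R := k) h * Coalgebra.counit (R := k) K := by
  have := LinearMap.congr_fun hp.2 (h ⊗ₜ[k] K)
  simp only [LinearMap.comp_apply] at this
  rw [this]
  simp [counitT, smul_eq_mul]

/-- convolution identity `p ⋆ (S ∘ p) = η ∘ ε` in representation form -/
lemma p_conv_Sp {p : H ⊗[k] H →ₗ[k] H} (hp : IsCoalgMorCop k H p)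
    {x y : H} {n m : ℕ} {x1 x2 : Fin n → H} {y1 y2 : Fin m → H}
    (hx : (∑ i, x1 i ⊗ₜ[k] x2 i) = Coalgebra.comul (R := k) x)
    (hy : (∑ j, y1 j ⊗ₜ[k] y2 j) = Coalgebra.comul (R := k) y) :
    ∑ i, ∑ j, p (x1 i ⊗ₜ[k] y2 j) * HopfAlgebra.antipode (R := k) (p (x2 i ⊗ₜ[k] y1 j))
      = (Coalgebra.counit (R := k) x * Coalgebra.counit (R := k) y) • (1 : H) := by
  rw [sum2_mul_antipode (comul_p hp hx hy).symm, counit_p hp]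

/-- `Gmap` on a pure tensor in terms of representations -/
lemma Gmap_tmul (f : H ⊗[k] H →ₗ[k] H) {h l : H} {n : ℕ} {l1 l2 : Fin n → H}
    (hl : (∑ i, l1 i ⊗ₜ[k] l2 i) = Coalgebra.comul (R := k) l) :
    Gmap k H f (h ⊗ₜ[k] l) = ∑ i, f (h ⊗ₜ[k] l1 i) ⊗ₜ[k] l2 i := by
  have h1 : LinearMap.lTensor H (Coalgebra.comul (R := k)) (h ⊗ₜ[k] l)
      = ∑ i, h ⊗ₜ[k] (l1 i ⊗ₜ[k] l2 i) := by
    rw [LinearMap.lTensor_tmul, ← hl, TensorProduct.tmul_sum]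
  simp only [Gmap, LinearMap.comp_apply, h1, map_sum]
  simp [TensorProduct.assoc_symm_tmul]

/-- the unit acts trivially : `p (1 ⊗ l) = ε(l) • 1` -/
lemma p_one_tmul {p d : H ⊗[k] H →ₗ[k] H} (hdist : QBraceDistrib k H p d)
    (hd1 : ∀ x : H, d (x ⊗ₜ[k] (1 : H)) = x)
    (hsurj : Function.Surjective (Gmap k H p)) (l : H) :
    p ((1 : H) ⊗ₜ[k] l) = Coalgebra.counit (R := k) l • (1 : H) := by
  set Ψ : H ⊗[k] H →ₗ[k] H :=
    LinearMap.mul' k H ∘ₗ LinearMap.lTensor H (p ∘ₗ TensorProduct.mk k H H 1) with hΨ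
  have hone : (∑ _j : Fin 1, (1 : H) ⊗ₜ[k] (1 : H)) = Coalgebra.comul (R := k) (1 : H) := by
    simp [Bialgebra.comul_one, Algebra.TensorProduct.one_def]
  have claimA : Ψ ∘ₗ Gmap k H p = p := by
    apply TensorProduct.ext'
    intro h l
    obtain ⟨n, l1, l2, hl⟩ := exists_rep (k := k) l
    have hd := (hdist h 1 l n 1 l1 l2 (fun _ => 1) (fun _ => 1) hl hone).1
    simp only [LinearMap.comp_apply, Gmap_tmul p hl]
    simp only [mul_one, hd1, Fin.sum_univ_one] at hd
    rw [map_sum]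
    simp only [hΨ, LinearMap.comp_apply, LinearMap.lTensor_tmul, LinearMap.mul'_apply,
      TensorProduct.mk_apply]
    exact hd.symm
  have claimB : cE k H ∘ₗ Gmap k H p = p := by
    apply TensorProduct.ext'
    intro h l
    obtain ⟨n, l1, l2, hl⟩ := exists_rep (k := k) l
    simp only [LinearMap.comp_apply, Gmap_tmul p hl, map_sum, cE,
      LinearMap.lTensor_tmul, LinearEquiv.coe_coe, TensorProduct.rid_tmul]
    calc ∑ i, Coalgebra.counit (R := k) (l2 i) • p (h ⊗ₜ[k] l1 i)
        = p (h ⊗ₜ[k] ∑ i, Coalgebra.counit (R := k) (l2 i) • l1 i) := by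
          rw [TensorProduct.tmul_sum, map_sum]
          exact Finset.sum_congr rfl (fun i _ => by rw [TensorProduct.tmul_smul, map_smul])
      _ = p (h ⊗ₜ[k] l) := by rw [sum_smul_counit hl]
  have hPsiCE : ∀ z : H ⊗[k] H, Ψ z = cE k H z := by
    intro z
    obtain ⟨w, hw⟩ := hsurj z
    rw [← hw, ← LinearMap.comp_apply, claimA, ← LinearMap.comp_apply (cE k H), claimB]
  have := hPsiCE ((1 : H) ⊗ₜ[k] l)
  simp only [hΨ, LinearMap.comp_apply, LinearMap.lTensor_tmul, TensorProduct.mk_apply,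
    LinearMap.mul'_apply, one_mul, cE, LinearEquiv.coe_coe, TensorProduct.rid_tmul] at this
  exact this

end AuxLemmas2
section AuxLemmas3

open Coalgebra HopfAlgebra LinearMap

variable {k H}

/-- the key identity `∑ (S(h₍₁₎)·(k₍₂₎⊥h₍₂₎))(h₍₃₎·k₍₁₎) = ε(h)ε(k)1`,
obtained from the distributivity law and the exchange identity. -/
lemma starE {p d : H ⊗[k] H →ₗ[k] H} (hdist : QBraceDistrib k H p d)
    (hex : ExchangeId k H p d)
    (hone : ∀ l : H, p ((1 : H) ⊗ₜ[k] l) = Coalgebra.counit (R := k) l • (1 : H))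
    (x K : H) (n : ℕ) (a b : Fin n → H)
    (hab : (∑ i, a i ⊗ₜ[k] b i) = Coalgebra.comul (R := k) x)
    (q : Fin n → ℕ) (f g : (i : Fin n) → Fin (q i) → H)
    (hfg : ∀ i, (∑ j, f i j ⊗ₜ[k] g i j) = Coalgebra.comul (R := k) (b i))
    (r : ℕ) (K1 K2 : Fin r → H)
    (hK : (∑ t, K1 t ⊗ₜ[k] K2 t) = Coalgebra.comul (R := k) K) :
    ∑ i, ∑ j, ∑ t, p (HopfAlgebra.antipode (R := k) (a i) ⊗ₜ[k] d (K2 t ⊗ₜ[k] f i j))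
        * p (g i j ⊗ₜ[k] K1 t)
      = (Coalgebra.counit (R := k) x * Coalgebra.counit (R := k) K) • (1 : H) := by
  have hD : ∀ i, p ((HopfAlgebra.antipode (R := k) (a i) * b i) ⊗ₜ[k] K)
      = ∑ t, ∑ j, p (HopfAlgebra.antipode (R := k) (a i) ⊗ₜ[k] d (K1 t ⊗ₜ[k] g i j))
          * p (f i j ⊗ₜ[k] K2 t) :=
    fun i => (hdist (HopfAlgebra.antipode (R := k) (a i)) (b i) K r (q i) K1 K2
      (f i) (g i) hK (hfg i)).1
  have hE : ∀ i, ∑ t, ∑ j, p (HopfAlgebra.antipode (R := k) (a i) ⊗ₜ[k] d (K1 t ⊗ₜ[k] g i j))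
        * p (f i j ⊗ₜ[k] K2 t)
      = ∑ j, ∑ t, p (HopfAlgebra.antipode (R := k) (a i) ⊗ₜ[k] d (K2 t ⊗ₜ[k] f i j))
        * p (g i j ⊗ₜ[k] K1 t) := by
    intro i
    have hx := hex (b i) K (q i) r (f i) (g i) K1 K2 (hfg i) hK
    have := congrArg (fun z => (LinearMap.mul' k H)
      ((LinearMap.rTensor H (p ∘ₗ TensorProduct.mk k H H
        (HopfAlgebra.antipode (R := k) (a i)))) z)) hx
    simp only [map_sum, LinearMap.rTensor_tmul, LinearMap.comp_apply,
      TensorProduct.mk_apply, LinearMap.mul'_apply] at this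
    rw [Finset.sum_comm]
    exact this
  calc ∑ i, ∑ j, ∑ t, p (HopfAlgebra.antipode (R := k) (a i) ⊗ₜ[k] d (K2 t ⊗ₜ[k] f i j))
        * p (g i j ⊗ₜ[k] K1 t)
      = ∑ i, p ((HopfAlgebra.antipode (R := k) (a i) * b i) ⊗ₜ[k] K) :=
        Finset.sum_congr rfl fun i _ => ((hD i).trans (hE i)).symm
    _ = p ((∑ i, HopfAlgebra.antipode (R := k) (a i) * b i) ⊗ₜ[k] K) := by
        rw [TensorProduct.sum_tmul, map_sum]
    _ = p ((Coalgebra.counit (R := k) x • (1 : H)) ⊗ₜ[k] K) := by rw [sum_antipode_mul hab]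
    _ = Coalgebra.counit (R := k) x • p ((1 : H) ⊗ₜ[k] K) := by
        rw [← TensorProduct.smul_tmul', map_smul]
    _ = (Coalgebra.counit (R := k) x * Coalgebra.counit (R := k) K) • (1 : H) := by
        rw [hone K, smul_smul]

end AuxLemmas3
section AuxLemmas4
set_option synthInstance.maxHeartbeats 1000000
set_option maxHeartbeats 1000000

open Coalgebra HopfAlgebra LinearMap

variable {k H}

/-- coassociativity transport for trilinear expressions -/
lemma trans3 {M : Type} [AddCommGroup M] [Module k M]
    (L : (H ⊗[k] H) ⊗[k] H →ₗ[k] M)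
    {x : H} {n : ℕ} {a1 a2 : Fin n → H}
    (hx : (∑ i, a1 i ⊗ₜ[k] a2 i) = Coalgebra.comul (R := k) x)
    {m : Fin n → ℕ} {b1 b2 : (i : Fin n) → Fin (m i) → H}
    (hb : ∀ i, (∑ j, b1 i j ⊗ₜ[k] b2 i j) = Coalgebra.comul (R := k) (a1 i))
    {q : Fin n → ℕ} {c1 c2 : (i : Fin n) → Fin (q i) → H}
    (hc : ∀ i, (∑ j, c1 i j ⊗ₜ[k] c2 i j) = Coalgebra.comul (R := k) (a2 i)) :
    ∑ i, ∑ j, L ((b1 i j ⊗ₜ[k] b2 i j) ⊗ₜ[k] a2 i)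
      = ∑ i, ∑ j, L ((a1 i ⊗ₜ[k] c1 i j) ⊗ₜ[k] c2 i j) := by
  have key : (∑ i, ∑ j, (b1 i j ⊗ₜ[k] b2 i j) ⊗ₜ[k] a2 i)
      = ∑ i, ∑ j, (a1 i ⊗ₜ[k] c1 i j) ⊗ₜ[k] c2 i j := by
    have e1 : (∑ i, ∑ j, (b1 i j ⊗ₜ[k] b2 i j) ⊗ₜ[k] a2 i)
        = LinearMap.rTensor H (Coalgebra.comul (R := k))
            (Coalgebra.comul (R := k) x) := by
      rw [← hx, map_sum]
      refine Finset.sum_congr rfl fun i _ => ?_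
      rw [LinearMap.rTensor_tmul, ← hb i, TensorProduct.sum_tmul]
    have e2 : (∑ i, ∑ j, (a1 i ⊗ₜ[k] c1 i j) ⊗ₜ[k] c2 i j)
        = (TensorProduct.assoc k H H H).symm
            (LinearMap.lTensor H (Coalgebra.comul (R := k))
              (Coalgebra.comul (R := k) x)) := by
      rw [← hx, map_sum, map_sum]
      refine Finset.sum_congr rfl fun i _ => ?_
      rw [LinearMap.lTensor_tmul, ← hc i, TensorProduct.tmul_sum, map_sum]
      exact Finset.sum_congr rfl fun j _ => by rw [TensorProduct.assoc_symm_tmul]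
    rw [e1, e2, Coalgebra.coassoc_symm_apply]
  have := congrArg L key
  simpa only [map_sum] using this

/-- coassociativity transport for "reversed" trilinear expressions -/
lemma trans3rev {M : Type} [AddCommGroup M] [Module k M]
    (L : (H ⊗[k] H) ⊗[k] H →ₗ[k] M)
    {K : H} {r : ℕ} {A B : Fin r → H}
    (hK : (∑ t, A t ⊗ₜ[k] B t) = Coalgebra.comul (R := k) K)
    {u : Fin r → ℕ} {A1 A2 : (t : Fin r) → Fin (u t) → H}
    (hA : ∀ t, (∑ w, A1 t w ⊗ₜ[k] A2 t w) = Coalgebra.comul (R := k) (A t))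
    {v : Fin r → ℕ} {B1 B2 : (t : Fin r) → Fin (v t) → H}
    (hB : ∀ t, (∑ w, B1 t w ⊗ₜ[k] B2 t w) = Coalgebra.comul (R := k) (B t)) :
    ∑ t, ∑ w, L ((B t ⊗ₜ[k] A2 t w) ⊗ₜ[k] A1 t w)
      = ∑ t, ∑ w, L ((B2 t w ⊗ₜ[k] B1 t w) ⊗ₜ[k] A t) := by
  set Φ₁ : (H ⊗[k] H) ⊗[k] H →ₗ[k] (H ⊗[k] H) ⊗[k] H :=
    (TensorProduct.assoc k H H H).symm.toLinearMap
      ∘ₗ LinearMap.lTensor H (TensorProduct.comm k H H).toLinearMap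
      ∘ₗ (TensorProduct.comm k (H ⊗[k] H) H).toLinearMap with hΦ₁
  set Φ₂ : H ⊗[k] (H ⊗[k] H) →ₗ[k] (H ⊗[k] H) ⊗[k] H :=
    LinearMap.rTensor H (TensorProduct.comm k H H).toLinearMap
      ∘ₗ (TensorProduct.comm k H (H ⊗[k] H)).toLinearMap with hΦ₂
  have hcomp : Φ₂ ∘ₗ (TensorProduct.assoc k H H H).toLinearMap = Φ₁ := by
    apply TensorProduct.ext_threefold
    intro a b c
    simp [hΦ₁, hΦ₂]
  have e1 : (∑ t, ∑ w, (B t ⊗ₜ[k] A2 t w) ⊗ₜ[k] A1 t w)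
      = Φ₁ (LinearMap.rTensor H (Coalgebra.comul (R := k))
          (Coalgebra.comul (R := k) K)) := by
    rw [← hK, map_sum, map_sum]
    refine Finset.sum_congr rfl fun t _ => ?_
    rw [LinearMap.rTensor_tmul, ← hA t, TensorProduct.sum_tmul, map_sum]
    refine Finset.sum_congr rfl fun w _ => ?_
    simp [hΦ₁]
  have e2 : (∑ t, ∑ w, (B2 t w ⊗ₜ[k] B1 t w) ⊗ₜ[k] A t)
      = Φ₂ (LinearMap.lTensor H (Coalgebra.comul (R := k))
          (Coalgebra.comul (R := k) K)) := by
    rw [← hK, map_sum, map_sum]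
    refine Finset.sum_congr rfl fun t _ => ?_
    rw [LinearMap.lTensor_tmul, ← hB t, TensorProduct.tmul_sum, map_sum]
    refine Finset.sum_congr rfl fun w _ => ?_
    simp [hΦ₂]
  have key : (∑ t, ∑ w, (B t ⊗ₜ[k] A2 t w) ⊗ₜ[k] A1 t w)
      = ∑ t, ∑ w, (B2 t w ⊗ₜ[k] B1 t w) ⊗ₜ[k] A t := by
    have hc2 := LinearMap.congr_fun hcomp
    simp only [LinearMap.comp_apply, LinearEquiv.coe_coe] at hc2
    rw [e1, e2, ← Coalgebra.coassoc_apply, hc2]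
  have := congrArg L key
  simpa only [map_sum] using this

/-- coassociativity transport for quadrilinear expressions -/
lemma trans4 {M : Type} [AddCommGroup M] [Module k M]
    (L : ((H ⊗[k] H) ⊗[k] H) ⊗[k] H →ₗ[k] M)
    {x : H} {n : ℕ} {a b : Fin n → H}
    (hx : (∑ i, a i ⊗ₜ[k] b i) = Coalgebra.comul (R := k) x)
    {m : Fin n → ℕ} {c e : (i : Fin n) → Fin (m i) → H}
    (hce : ∀ i, (∑ j, c i j ⊗ₜ[k] e i j) = Coalgebra.comul (R := k) (a i))
    {q : Fin n → ℕ} {f g : (i : Fin n) → Fin (q i) → H}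
    (hfg : ∀ i, (∑ s, f i s ⊗ₜ[k] g i s) = Coalgebra.comul (R := k) (b i))
    {m' : Fin n → ℕ} {P Q : (i : Fin n) → Fin (m' i) → H}
    (hPQ : ∀ i, (∑ j, P i j ⊗ₜ[k] Q i j) = Coalgebra.comul (R := k) (a i))
    {w : (i : Fin n) → Fin (m' i) → ℕ}
    {u v : (i : Fin n) → (j : Fin (m' i)) → Fin (w i j) → H}
    (huv : ∀ i j, (∑ t, u i j t ⊗ₜ[k] v i j t) = Coalgebra.comul (R := k) (Q i j)) :
    ∑ i, ∑ j, ∑ s, L (((c i j ⊗ₜ[k] e i j) ⊗ₜ[k] f i s) ⊗ₜ[k] g i s)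
      = ∑ i, ∑ j, ∑ t, L (((P i j ⊗ₜ[k] u i j t) ⊗ₜ[k] v i j t) ⊗ₜ[k] b i) := by
  set ρ := TensorProduct.assoc k (H ⊗[k] H) H H with hρ
  have step2 : ρ.symm.toLinearMap
        ∘ₗ LinearMap.rTensor (H ⊗[k] H) (Coalgebra.comul (R := k))
        ∘ₗ (TensorProduct.assoc k H H H).toLinearMap
      = LinearMap.rTensor H (LinearMap.rTensor H (Coalgebra.comul (R := k))) := by
    apply TensorProduct.ext_threefold
    intro a' b' c'
    simp [hρ, TensorProduct.assoc_symm_tmul]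
  have key : ∀ xx : H, ρ.symm (TensorProduct.map (Coalgebra.comul (R := k))
        (Coalgebra.comul (R := k)) (Coalgebra.comul (R := k) xx))
      = LinearMap.rTensor H (LinearMap.rTensor H (Coalgebra.comul (R := k))
          ∘ₗ Coalgebra.comul (R := k)) (Coalgebra.comul (R := k) xx) := by
    intro xx
    have h1 : TensorProduct.map (Coalgebra.comul (R := k)) (Coalgebra.comul (R := k))
          (Coalgebra.comul (R := k) xx)
        = LinearMap.rTensor (H ⊗[k] H) (Coalgebra.comul (R := k))
            (LinearMap.lTensor H (Coalgebra.comul (R := k))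
              (Coalgebra.comul (R := k) xx)) := by
      conv_rhs => rw [← LinearMap.comp_apply]
      rw [LinearMap.rTensor_comp_lTensor]
    have h2 := Coalgebra.coassoc_apply (R := k) xx
    have h3 := LinearMap.congr_fun step2
      (LinearMap.rTensor H (Coalgebra.comul (R := k)) (Coalgebra.comul (R := k) xx))
    simp only [LinearMap.comp_apply, LinearEquiv.coe_coe] at h3
    rw [h1, ← h2, h3, LinearMap.rTensor_comp, LinearMap.comp_apply]
  have e1 : (∑ i, ∑ j, ∑ s, ((c i j ⊗ₜ[k] e i j) ⊗ₜ[k] f i s) ⊗ₜ[k] g i s)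
      = ρ.symm (TensorProduct.map (Coalgebra.comul (R := k)) (Coalgebra.comul (R := k))
          (Coalgebra.comul (R := k) x)) := by
    rw [← hx, map_sum, map_sum]
    refine Finset.sum_congr rfl fun i _ => ?_
    rw [TensorProduct.map_tmul, ← hce i, ← hfg i, TensorProduct.sum_tmul, map_sum]
    refine Finset.sum_congr rfl fun j _ => ?_
    rw [TensorProduct.tmul_sum, map_sum]
    exact Finset.sum_congr rfl fun s _ => by rw [TensorProduct.assoc_symm_tmul]
  have e2 : (∑ i, ∑ j, ∑ t, ((P i j ⊗ₜ[k] u i j t) ⊗ₜ[k] v i j t) ⊗ₜ[k] b i)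
      = LinearMap.rTensor H (LinearMap.rTensor H (Coalgebra.comul (R := k))
          ∘ₗ Coalgebra.comul (R := k)) (Coalgebra.comul (R := k) x) := by
    rw [← hx, map_sum]
    refine Finset.sum_congr rfl fun i _ => ?_
    rw [LinearMap.rTensor_tmul, LinearMap.comp_apply, ← Coalgebra.coassoc_symm_apply,
      ← hPQ i, map_sum, map_sum, TensorProduct.sum_tmul]
    refine Finset.sum_congr rfl fun j _ => ?_
    rw [LinearMap.lTensor_tmul, ← huv i j, TensorProduct.tmul_sum, map_sum,
      TensorProduct.sum_tmul]
    exact Finset.sum_congr rfl fun t _ => by rw [TensorProduct.assoc_symm_tmul]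
  have keyel : (∑ i, ∑ j, ∑ s, ((c i j ⊗ₜ[k] e i j) ⊗ₜ[k] f i s) ⊗ₜ[k] g i s)
      = ∑ i, ∑ j, ∑ t, ((P i j ⊗ₜ[k] u i j t) ⊗ₜ[k] v i j t) ⊗ₜ[k] b i := by
    rw [e1, e2, key x]
  have := congrArg L keyel
  simpa only [map_sum] using this

end AuxLemmas4
section MainLemma
set_option synthInstance.maxHeartbeats 1000000
set_option maxHeartbeats 2000000

open Coalgebra HopfAlgebra LinearMap

variable {k H}

lemma main1 {p d : H ⊗[k] H →ₗ[k] H} (hpd : IsHopfQBrace k H p d) :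
    ∀ (x y : H) (n0 : ℕ) (x1 x2 : Fin n0 → H),
      (∑ i, x1 i ⊗ₜ[k] x2 i) = Coalgebra.comul (R := k) x →
      HopfAlgebra.antipode (R := k) (p (x ⊗ₜ[k] y))
        = ∑ i, p (HopfAlgebra.antipode (R := k) (x1 i) ⊗ₜ[k] d (y ⊗ₜ[k] x2 i)) := by
  obtain ⟨hp, hd, hex, hGp, hGd, hqc, hmp, hmd, hdist⟩ := hpd
  have hone : ∀ l : H, p ((1 : H) ⊗ₜ[k] l) = Coalgebra.counit (R := k) l • (1 : H) :=
    p_one_tmul hdist hmd.1 hGp.surjective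
  intro x y n0 x1 x2 hx0
  obtain ⟨n, a, b, hab⟩ := exists_rep (k := k) x
  choose m c e hce using fun i : Fin n => exists_rep (k := k) (a i)
  choose q f g hfg using fun i : Fin n => exists_rep (k := k) (b i)
  choose m' P Q hPQ using fun i : Fin n => exists_rep (k := k) (a i)
  choose w u v huv using fun (i : Fin n) (j : Fin (m' i)) => exists_rep (k := k) (Q i j)
  obtain ⟨r, A, B, hAB⟩ := exists_rep (k := k) y
  choose uu A1 A2 hA using fun t : Fin r => exists_rep (k := k) (A t)
  choose vv B1 B2 hB using fun t : Fin r => exists_rep (k := k) (B t)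
  set S : H →ₗ[k] H := HopfAlgebra.antipode (R := k) with hS
  set Ly : H ⊗[k] H →ₗ[k] H :=
    p ∘ₗ TensorProduct.map S (d ∘ₗ TensorProduct.mk k H H y) with hLy
  have hLy_tmul : ∀ z1 z2 : H, Ly (z1 ⊗ₜ[k] z2) = p (S z1 ⊗ₜ[k] d (y ⊗ₜ[k] z2)) := by
    intro z1 z2
    simp [hLy]
  have goalRHS : (∑ i, p (S (x1 i) ⊗ₜ[k] d (y ⊗ₜ[k] x2 i)))
      = Ly (Coalgebra.comul (R := k) x) := by
    rw [← hx0, map_sum]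
    exact Finset.sum_congr rfl fun i _ => (hLy_tmul _ _).symm
  have hlin : ∀ (i : Fin n) (j : Fin (m i)),
      (∑ t, Coalgebra.counit (R := k) (A t) • p (S (c i j) ⊗ₜ[k] d (B t ⊗ₜ[k] e i j)))
        = p (S (c i j) ⊗ₜ[k] d (y ⊗ₜ[k] e i j)) := by
    intro i j
    conv_rhs => rw [← sum_counit_smul hAB]
    rw [TensorProduct.sum_tmul, map_sum, TensorProduct.tmul_sum, map_sum]
    refine Finset.sum_congr rfl fun t _ => ?_
    rw [← TensorProduct.smul_tmul', map_smul, TensorProduct.tmul_smul, map_smul]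
  have eval1 : (∑ i, ∑ j, ∑ s, ∑ t, ∑ w',
        p (S (c i j) ⊗ₜ[k] d (B t ⊗ₜ[k] e i j))
          * (p (f i s ⊗ₜ[k] A2 t w') * S (p (g i s ⊗ₜ[k] A1 t w'))))
      = Ly (Coalgebra.comul (R := k) x) := by
    calc (∑ i, ∑ j, ∑ s, ∑ t, ∑ w',
        p (S (c i j) ⊗ₜ[k] d (B t ⊗ₜ[k] e i j))
          * (p (f i s ⊗ₜ[k] A2 t w') * S (p (g i s ⊗ₜ[k] A1 t w'))))
        = ∑ i, ∑ t, ∑ j, ∑ s, ∑ w',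
            p (S (c i j) ⊗ₜ[k] d (B t ⊗ₜ[k] e i j))
              * (p (f i s ⊗ₜ[k] A2 t w') * S (p (g i s ⊗ₜ[k] A1 t w'))) := by
          refine Finset.sum_congr rfl fun i _ => ?_
          rw [show (∑ j, ∑ s, ∑ t, ∑ w',
              p (S (c i j) ⊗ₜ[k] d (B t ⊗ₜ[k] e i j))
                * (p (f i s ⊗ₜ[k] A2 t w') * S (p (g i s ⊗ₜ[k] A1 t w'))))
            = ∑ j, ∑ t, ∑ s, ∑ w',
              p (S (c i j) ⊗ₜ[k] d (B t ⊗ₜ[k] e i j))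
                * (p (f i s ⊗ₜ[k] A2 t w') * S (p (g i s ⊗ₜ[k] A1 t w')))
            from Finset.sum_congr rfl fun j _ => Finset.sum_comm]
          exact Finset.sum_comm
      _ = ∑ i, ∑ t,
            (∑ j, p (S (c i j) ⊗ₜ[k] d (B t ⊗ₜ[k] e i j)))
              * (∑ s, ∑ w', p (f i s ⊗ₜ[k] A2 t w') * S (p (g i s ⊗ₜ[k] A1 t w'))) := by
          refine Finset.sum_congr rfl fun i _ => Finset.sum_congr rfl fun t _ => ?_
          rw [Finset.sum_mul]
          refine Finset.sum_congr rfl fun j _ => ?_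
          rw [Finset.mul_sum]
          exact Finset.sum_congr rfl fun s _ => by rw [Finset.mul_sum]
      _ = ∑ i, ∑ t, ∑ j,
            (Coalgebra.counit (R := k) (b i) * Coalgebra.counit (R := k) (A t))
              • p (S (c i j) ⊗ₜ[k] d (B t ⊗ₜ[k] e i j)) := by
          refine Finset.sum_congr rfl fun i _ => Finset.sum_congr rfl fun t _ => ?_
          rw [p_conv_Sp hp (hfg i) (hA t), mul_smul_comm, mul_one, Finset.smul_sum]
      _ = ∑ i, ∑ j, ∑ t,
            (Coalgebra.counit (R := k) (b i) * Coalgebra.counit (R := k) (A t))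
              • p (S (c i j) ⊗ₜ[k] d (B t ⊗ₜ[k] e i j)) := by
          exact Finset.sum_congr rfl fun i _ => Finset.sum_comm
      _ = ∑ i, ∑ j, Coalgebra.counit (R := k) (b i)
            • p (S (c i j) ⊗ₜ[k] d (y ⊗ₜ[k] e i j)) := by
          refine Finset.sum_congr rfl fun i _ => Finset.sum_congr rfl fun j _ => ?_
          rw [← hlin i j, Finset.smul_sum]
          exact Finset.sum_congr rfl fun t _ => mul_smul _ _ _
      _ = ∑ i, Coalgebra.counit (R := k) (b i) • Ly (Coalgebra.comul (R := k) (a i)) := by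
          refine Finset.sum_congr rfl fun i _ => ?_
          rw [← hce i, map_sum, Finset.smul_sum]
          exact Finset.sum_congr rfl fun j _ => by rw [hLy_tmul]
      _ = Ly (Coalgebra.comul (R := k) x) := by
          rw [← sum_smul_counit hab]
          simp only [map_sum, map_smul]

  have step1 : ∀ (i : Fin n) (j : Fin (m i)) (s : Fin (q i)),
      (∑ t, ∑ w', p (S (c i j) ⊗ₜ[k] d (B t ⊗ₜ[k] e i j))
          * (p (f i s ⊗ₜ[k] A2 t w') * S (p (g i s ⊗ₜ[k] A1 t w'))))
        = ∑ t, ∑ w', p (S (c i j) ⊗ₜ[k] d (B2 t w' ⊗ₜ[k] e i j))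
          * (p (f i s ⊗ₜ[k] B1 t w') * S (p (g i s ⊗ₜ[k] A t))) := by
    intro i j s
    have h := trans3rev (M := H)
      (LinearMap.mul' k H ∘ₗ TensorProduct.map
        ((TensorProduct.curry p (S (c i j))) ∘ₗ d ∘ₗ ((TensorProduct.mk k H H).flip (e i j)))
        (LinearMap.mul' k H ∘ₗ TensorProduct.map
          (TensorProduct.curry p (f i s))
          (S ∘ₗ TensorProduct.curry p (g i s)))
        ∘ₗ (TensorProduct.assoc k H H H).toLinearMap)
      hAB hA hB
    simpa only [LinearMap.comp_apply, LinearEquiv.coe_coe, TensorProduct.assoc_tmul,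
      TensorProduct.map_tmul, LinearMap.mul'_apply, TensorProduct.curry_apply,
      LinearMap.flip_apply, TensorProduct.mk_apply] using h
  set G : ((H ⊗[k] H) ⊗[k] H) ⊗[k] H →ₗ[k] H :=
    ∑ t, ∑ w', (LinearMap.mul' k H ∘ₗ TensorProduct.map
        (p ∘ₗ TensorProduct.map S (d ∘ₗ TensorProduct.mk k H H (B2 t w')))
        (LinearMap.mul' k H ∘ₗ TensorProduct.map
          (p ∘ₗ (TensorProduct.mk k H H).flip (B1 t w'))
          (S ∘ₗ p ∘ₗ (TensorProduct.mk k H H).flip (A t)))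
        ∘ₗ (TensorProduct.assoc k (H ⊗[k] H) H H).toLinearMap) with hG
  have hGtmul : ∀ z1 z2 z3 z4 : H, G (((z1 ⊗ₜ[k] z2) ⊗ₜ[k] z3) ⊗ₜ[k] z4)
      = ∑ t, ∑ w', p (S z1 ⊗ₜ[k] d (B2 t w' ⊗ₜ[k] z2))
          * (p (z3 ⊗ₜ[k] B1 t w') * S (p (z4 ⊗ₜ[k] A t))) := by
    intro z1 z2 z3 z4
    rw [hG]
    simp only [LinearMap.coe_sum, Finset.sum_apply, LinearMap.comp_apply,
      LinearEquiv.coe_coe, TensorProduct.assoc_tmul, TensorProduct.map_tmul,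
      LinearMap.mul'_apply, LinearMap.flip_apply, TensorProduct.mk_apply]
  have eval2 : (∑ i, ∑ j, ∑ s, ∑ t, ∑ w',
        p (S (c i j) ⊗ₜ[k] d (B t ⊗ₜ[k] e i j))
          * (p (f i s ⊗ₜ[k] A2 t w') * S (p (g i s ⊗ₜ[k] A1 t w'))))
      = S (p (x ⊗ₜ[k] y)) := by
    calc (∑ i, ∑ j, ∑ s, ∑ t, ∑ w',
        p (S (c i j) ⊗ₜ[k] d (B t ⊗ₜ[k] e i j))
          * (p (f i s ⊗ₜ[k] A2 t w') * S (p (g i s ⊗ₜ[k] A1 t w'))))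
        = ∑ i, ∑ j, ∑ s, G (((c i j ⊗ₜ[k] e i j) ⊗ₜ[k] f i s) ⊗ₜ[k] g i s) := by
          refine Finset.sum_congr rfl fun i _ => Finset.sum_congr rfl fun j _ =>
            Finset.sum_congr rfl fun s _ => ?_
          rw [step1 i j s, hGtmul]
      _ = ∑ i, ∑ j, ∑ t', G (((P i j ⊗ₜ[k] u i j t') ⊗ₜ[k] v i j t') ⊗ₜ[k] b i) :=
          trans4 G hab hce hfg hPQ huv
      _ = ∑ i, ∑ j, ∑ t', ∑ t, ∑ w',
            p (S (P i j) ⊗ₜ[k] d (B2 t w' ⊗ₜ[k] u i j t'))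
              * (p (v i j t' ⊗ₜ[k] B1 t w') * S (p (b i ⊗ₜ[k] A t))) := by
          exact Finset.sum_congr rfl fun i _ => Finset.sum_congr rfl fun j _ =>
            Finset.sum_congr rfl fun t' _ => hGtmul _ _ _ _
      _ = ∑ i, ∑ t, ∑ j, ∑ t', ∑ w',
            p (S (P i j) ⊗ₜ[k] d (B2 t w' ⊗ₜ[k] u i j t'))
              * (p (v i j t' ⊗ₜ[k] B1 t w') * S (p (b i ⊗ₜ[k] A t))) := by
          refine Finset.sum_congr rfl fun i _ => ?_
          rw [show (∑ j, ∑ t', ∑ t, ∑ w',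
              p (S (P i j) ⊗ₜ[k] d (B2 t w' ⊗ₜ[k] u i j t'))
                * (p (v i j t' ⊗ₜ[k] B1 t w') * S (p (b i ⊗ₜ[k] A t))))
            = ∑ j, ∑ t, ∑ t', ∑ w',
              p (S (P i j) ⊗ₜ[k] d (B2 t w' ⊗ₜ[k] u i j t'))
                * (p (v i j t' ⊗ₜ[k] B1 t w') * S (p (b i ⊗ₜ[k] A t)))
            from Finset.sum_congr rfl fun j _ => Finset.sum_comm]
          exact Finset.sum_comm
      _ = ∑ i, ∑ t,
            (∑ j, ∑ t', ∑ w',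
              p (S (P i j) ⊗ₜ[k] d (B2 t w' ⊗ₜ[k] u i j t'))
                * p (v i j t' ⊗ₜ[k] B1 t w')) * S (p (b i ⊗ₜ[k] A t)) := by
          refine Finset.sum_congr rfl fun i _ => Finset.sum_congr rfl fun t _ => ?_
          rw [Finset.sum_mul]
          refine Finset.sum_congr rfl fun j _ => ?_
          rw [Finset.sum_mul]
          refine Finset.sum_congr rfl fun t' _ => ?_
          rw [Finset.sum_mul]
          exact Finset.sum_congr rfl fun w' _ => (mul_assoc _ _ _).symm
      _ = ∑ i, ∑ t,
            ((Coalgebra.counit (R := k) (a i) * Coalgebra.counit (R := k) (B t)) • (1 : H))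
              * S (p (b i ⊗ₜ[k] A t)) := by
          refine Finset.sum_congr rfl fun i _ => Finset.sum_congr rfl fun t _ => ?_
          rw [starE hdist hex hone (a i) (B t) (m' i) (P i) (Q i) (hPQ i)
            (w i) (u i) (v i) (huv i) (vv t) (B1 t) (B2 t) (hB t)]
      _ = S (p (x ⊗ₜ[k] y)) := by
          rw [show x = ∑ i, Coalgebra.counit (R := k) (a i) • b i from (sum_counit_smul hab).symm,
            show y = ∑ t, Coalgebra.counit (R := k) (B t) • A t from (sum_smul_counit hAB).symm]
          rw [TensorProduct.sum_tmul, map_sum, map_sum]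
          refine Finset.sum_congr rfl fun i _ => ?_
          rw [← TensorProduct.smul_tmul', map_smul, map_smul, TensorProduct.tmul_sum,
            map_sum, map_sum, Finset.smul_sum]
          refine Finset.sum_congr rfl fun t _ => ?_
          rw [TensorProduct.tmul_smul, map_smul, map_smul, smul_smul, smul_mul_assoc, one_mul]

  rw [goalRHS, ← eval1, eval2]

end MainLemma
/-- `S(h·k) = S(h₍₁₎)·(k ⊥ h₍₂₎)` and `S(h)·k = S(h₍₁₎ · k_(h₍₂₎))`
for a Hopf q-brace with bijective antipode, where `k_h = k ⊥ S(h)`. -/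
theorem stmt_12 (p d : H ⊗[k] H →ₗ[k] H) (hpd : IsHopfQBrace k H p d)
    (Sinv : H →ₗ[k] H)
    (hS1 : HopfAlgebra.antipode (R := k) (A := H) ∘ₗ Sinv = LinearMap.id)
    (hS2 : Sinv ∘ₗ HopfAlgebra.antipode (R := k) (A := H) = LinearMap.id) :
    ∀ (h kk : H) (n : ℕ) (h1 h2 : Fin n → H),
      (∑ i, h1 i ⊗ₜ[k] h2 i) = Coalgebra.comul (R := k) h →
      (HopfAlgebra.antipode (R := k) (p (h ⊗ₜ[k] kk)) =
          ∑ i, p (HopfAlgebra.antipode (R := k) (h1 i) ⊗ₜ[k] d (kk ⊗ₜ[k] h2 i)) ∧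
        p (HopfAlgebra.antipode (R := k) h ⊗ₜ[k] kk) =
          HopfAlgebra.antipode (R := k)
            (∑ i, p (h1 i ⊗ₜ[k]
              d (kk ⊗ₜ[k] HopfAlgebra.antipode (R := k) (h2 i))))) := by
  intro h kk n h1 h2 hh
  have hm1 := main1 (k := k) (H := H) hpd
  set S : H →ₗ[k] H := HopfAlgebra.antipode (R := k) with hS
  have hmd := hpd.2.2.2.2.2.2.2.1
  refine ⟨hm1 h kk n h1 h2 hh, ?_⟩
  choose m c e hce using fun i : Fin n => exists_rep (k := k) (h1 i)
  choose q w1 w2 hw using fun i : Fin n => exists_rep (k := k) (h2 i)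
  set LL : (H ⊗[k] H) ⊗[k] H →ₗ[k] H :=
    p ∘ₗ TensorProduct.map S
        (d ∘ₗ TensorProduct.mk k H H kk ∘ₗ LinearMap.mul' k H ∘ₗ LinearMap.lTensor H S)
      ∘ₗ (TensorProduct.assoc k H H H).toLinearMap with hLL
  have hLLtmul : ∀ z1 z2 z3 : H, LL ((z1 ⊗ₜ[k] z2) ⊗ₜ[k] z3)
      = p (S z1 ⊗ₜ[k] d (kk ⊗ₜ[k] (z2 * S z3))) := by
    intro z1 z2 z3
    simp only [hLL, LinearMap.comp_apply, LinearEquiv.coe_coe, TensorProduct.assoc_tmul,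
      TensorProduct.map_tmul, LinearMap.lTensor_tmul, LinearMap.mul'_apply,
      TensorProduct.mk_apply]
  symm
  calc S (∑ i, p (h1 i ⊗ₜ[k] d (kk ⊗ₜ[k] S (h2 i))))
      = ∑ i, S (p (h1 i ⊗ₜ[k] d (kk ⊗ₜ[k] S (h2 i)))) := map_sum S _ _
    _ = ∑ i, ∑ j, p (S (c i j) ⊗ₜ[k] d (d (kk ⊗ₜ[k] S (h2 i)) ⊗ₜ[k] e i j)) :=
        Finset.sum_congr rfl fun i _ =>
          hm1 (h1 i) (d (kk ⊗ₜ[k] S (h2 i))) (m i) (c i) (e i) (hce i)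
    _ = ∑ i, ∑ j, LL ((c i j ⊗ₜ[k] e i j) ⊗ₜ[k] h2 i) := by
        refine Finset.sum_congr rfl fun i _ => Finset.sum_congr rfl fun j _ => ?_
        rw [hLLtmul, hmd.2 kk (e i j) (S (h2 i))]
    _ = ∑ i, ∑ j, LL ((h1 i ⊗ₜ[k] w1 i j) ⊗ₜ[k] w2 i j) := trans3 LL hh hce hw
    _ = ∑ i, p (S (h1 i) ⊗ₜ[k] d (kk ⊗ₜ[k] ∑ j, w1 i j * S (w2 i j))) := by
        refine Finset.sum_congr rfl fun i _ => ?_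
        rw [TensorProduct.tmul_sum, map_sum, TensorProduct.tmul_sum, map_sum]
        exact Finset.sum_congr rfl fun j _ => hLLtmul _ _ _
    _ = ∑ i, Coalgebra.counit (R := k) (h2 i) • p (S (h1 i) ⊗ₜ[k] kk) := by
        refine Finset.sum_congr rfl fun i _ => ?_
        rw [sum_mul_antipode (hw i), TensorProduct.tmul_smul, map_smul, hmd.1 kk,
          TensorProduct.tmul_smul, map_smul]
    _ = p (S (∑ i, Coalgebra.counit (R := k) (h2 i) • h1 i) ⊗ₜ[k] kk) := by
        rw [map_sum, TensorProduct.sum_tmul, map_sum]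
        exact Finset.sum_congr rfl fun i _ => by
          rw [map_smul, ← TensorProduct.smul_tmul', map_smul]
    _ = p (S h ⊗ₜ[k] kk) := by rw [sum_smul_counit hh]

end
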